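/- arXiv:2211.04088 — 2 statements merged into one kernel-verified Lean document; each statement's English description precedes it below -/
import Mathlib

section
/- Lemma 3 (spectral bound for the Hessian splitting). Assume the mixing-matrix assumption and that μ_g I ⪯ ∇²_y g_i(x,y) for all i, x, y (μ_g > 0), and let β > 0. Then for all (x,y), with D := D(x,y) and B as in the splitting, the matrix D is positive definite, B is positive semidefinite, and 0 ⪯ D^{-1/2} B D^{-1/2} ⪯ ρ I_{n d2}, where ρ := 2(1−θ)/(2(1−Θ) + β μ_g); moreover D^{-1/2} B D^{-1/2} ≺ I_{n d2} (its spectral norm is strictly less than 1). -/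
open Matrix Kronecker Function

noncomputable section

/-- Euclidean space `ℝ^d`. -/
abbrev Vec (d : ℕ) : Type := EuclideanSpace ℝ (Fin d)

/-- Block-diagonal matrix built from `n` blocks. -/
def blockDiag {n d d' : ℕ} (A : Fin n → Matrix (Fin d) (Fin d') ℝ) :
    Matrix (Fin n × Fin d) (Fin n × Fin d') ℝ :=
  Matrix.of fun p q => if p.1 = q.1 then A p.1 p.2 q.2 else 0

/-- Hessian of `gi` w.r.t. the second (inner) variable: entry `(a,b)` is `∂_{y_a}∂_{y_b} gi(x,y)`. -/
def hessYY {d1 d2 : ℕ} (gi : Vec d1 → Vec d2 → ℝ) (x : Vec d1) (y : Vec d2) :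
    Matrix (Fin d2) (Fin d2) ℝ :=
  Matrix.of fun a b =>
    fderiv ℝ (fun y' => fderiv ℝ (gi x) y' (EuclideanSpace.single b 1)) y
      (EuclideanSpace.single a 1)

/-- Extended mixing matrix `W ⊗ I_d`. -/
def kron1 {n : ℕ} (W : Matrix (Fin n) (Fin n) ℝ) (d : ℕ) :
    Matrix (Fin n × Fin d) (Fin n × Fin d) ℝ :=
  W ⊗ₖ (1 : Matrix (Fin d) (Fin d) ℝ)

/-- `diag(W) ⊗ I_d`. -/
def kronDiag {n : ℕ} (W : Matrix (Fin n) (Fin n) ℝ) (d : ℕ) :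
    Matrix (Fin n × Fin d) (Fin n × Fin d) ℝ :=
  (Matrix.diagonal fun i => W i i) ⊗ₖ (1 : Matrix (Fin d) (Fin d) ℝ)

/-- Assumption 1 of the paper: nonnegative, symmetric, doubly stochastic mixing matrix whose
`1`-eigenspace is the consensus direction, with diagonal entries in `[θ, Θ] ⊆ (0,1)`. -/
structure IsMixingMatrix {n : ℕ} (W : Matrix (Fin n) (Fin n) ℝ) (θ Θ : ℝ) : Prop where
  symm : W.IsSymm
  nonneg : ∀ i j, 0 ≤ W i j
  row_sum : ∀ i, ∑ j, W i j = 1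
  col_sum : ∀ j, ∑ i, W i j = 1
  null_iff : ∀ v : Fin n → ℝ, (1 - W) *ᵥ v = 0 ↔ ∃ c : ℝ, ∀ i, v i = c
  theta_pos : 0 < θ
  theta_le_diag : ∀ i, θ ≤ W i i
  diag_le_Theta : ∀ i, W i i ≤ Θ
  Theta_lt_one : Θ < 1

/-- Block-diagonal inner Hessian `∇²_y 𝐠(x,y)` for block families `x = (xᵢ)`, `y = (yᵢ)`. -/
def bigHessYY' {n d1 d2 : ℕ} (g : Fin n → Vec d1 → Vec d2 → ℝ)
    (x : Fin n → Vec d1) (y : Fin n → Vec d2) :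
    Matrix (Fin n × Fin d2) (Fin n × Fin d2) ℝ :=
  blockDiag fun i => hessYY (g i) (x i) (y i)

/-- `H(x,y) := (I − W⊗I) + β ∇²_y 𝐠(x,y)`. -/
def Hmat' {n d1 d2 : ℕ} (W : Matrix (Fin n) (Fin n) ℝ) (β : ℝ)
    (g : Fin n → Vec d1 → Vec d2 → ℝ) (x : Fin n → Vec d1) (y : Fin n → Vec d2) :
    Matrix (Fin n × Fin d2) (Fin n × Fin d2) ℝ :=
  (1 - kron1 W d2) + β • bigHessYY' g x y

/-- `D(x,y) := β ∇²_y 𝐠(x,y) + 2(I − diag(W⊗I))`. -/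
def Dmat' {n d1 d2 : ℕ} (W : Matrix (Fin n) (Fin n) ℝ) (β : ℝ)
    (g : Fin n → Vec d1 → Vec d2 → ℝ) (x : Fin n → Vec d1) (y : Fin n → Vec d2) :
    Matrix (Fin n × Fin d2) (Fin n × Fin d2) ℝ :=
  β • bigHessYY' g x y + (2 : ℝ) • (1 - kronDiag W d2)

/-- `B := I − 2 diag(W⊗I) + W⊗I`. -/
def Bmat {n : ℕ} (W : Matrix (Fin n) (Fin n) ℝ) (d : ℕ) :
    Matrix (Fin n × Fin d) (Fin n × Fin d) ℝ :=
  (1 : Matrix (Fin n × Fin d) (Fin n × Fin d) ℝ) - (2 : ℝ) • kronDiag W d + kron1 W d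

/-- The positive semidefinite square root of a positive semidefinite matrix
(the definition `Matrix.PosSemidef.sqrt` of the older Mathlib, since removed). -/
def Matrix.PosSemidef.sqrt {m : Type*} [Fintype m] [DecidableEq m] {𝕜 : Type*} [RCLike 𝕜]
    [PartialOrder 𝕜] {A : Matrix m m 𝕜} (hA : A.PosSemidef) : Matrix m m 𝕜 :=
  hA.1.eigenvectorUnitary.1 * diagonal ((↑) ∘ (√·) ∘ hA.1.eigenvalues) *
    (star hA.1.eigenvectorUnitary : Matrix m m 𝕜)

end

/-!
For `c ∈ ℝ` the splitting satisfies, with `P := ∇²_y 𝐠 − μ_g I ⪰ 0` (blockwise),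
`c D − B = cβ P + (I − W) ⊗ I + diag(c(βμ_g + 2(1 − wᵢᵢ)) − 2(1 − wᵢᵢ)) ⊗ I`,
and `B = (I + W − 2 diag W) ⊗ I`. For a symmetric doubly stochastic `W` both `I − W` and
`I + W − 2 diag W` are positive semidefinite, by `∑ᵢⱼ wᵢⱼ (vᵢ ± vⱼ)² = 2‖v‖² ± 2 vᵀWv`.
Taking `c = 1` gives `D − B ≻ 0`, and `c = ρ` gives `ρ D − B ⪰ 0` because `θ ≤ wᵢᵢ ≤ Θ` makes
`ρ` bound every ratio `2(1 − wᵢᵢ) / (βμ_g + 2(1 − wᵢᵢ))`. Congruence by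
`D^{-1/2}` turns `c D − B` into `c I − D^{-1/2} B D^{-1/2}`.
-/

open scoped MatrixOrder

namespace Matrix

section DoublyStochastic

variable {ι : Type*} [Fintype ι] [DecidableEq ι] {W : Matrix ι ι ℝ}

theorem sum_sum_mul_add_mul_sq (hW : W ∈ doublyStochastic ℝ ι) (v : ι → ℝ) (c : ℝ) :
    ∑ i, ∑ j, W i j * (v i + c * v j) ^ 2 = (1 + c ^ 2) * (v ⬝ᵥ v) + 2 * c * (v ⬝ᵥ W *ᵥ v) := by
  obtain ⟨-, hrow, hcol⟩ := mem_doublyStochastic_iff_sum.mp hW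
  have hexpand : ∀ i j, W i j * (v i + c * v j) ^ 2
      = W i j * v i ^ 2 + c ^ 2 * (W i j * v j ^ 2) + 2 * c * (v i * (W i j * v j)) :=
    fun i j => by ring
  simp only [hexpand, Finset.sum_add_distrib, ← Finset.mul_sum, ← Finset.sum_mul, hrow]
  rw [Finset.sum_comm (f := fun i j => W i j * v j ^ 2)]
  simp only [← Finset.sum_mul, hcol, dotProduct, mulVec]
  ring_nf

theorem posSemidef_one_sub_of_mem_doublyStochastic (hsymm : W.IsSymm)
    (hW : W ∈ doublyStochastic ℝ ι) : (1 - W).PosSemidef := by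
  refine PosSemidef.of_dotProduct_mulVec_nonneg
    (isHermitian_one.sub (isHermitian_iff_isSymm.mpr hsymm)) fun v => ?_
  have hsq : 0 ≤ ∑ i, ∑ j, W i j * (v i + -1 * v j) ^ 2 :=
    Finset.sum_nonneg fun i _ => Finset.sum_nonneg fun j _ =>
      mul_nonneg ((mem_doublyStochastic_iff_sum.mp hW).1 i j) (sq_nonneg _)
  rw [sum_sum_mul_add_mul_sq hW] at hsq
  simp only [star_trivial, sub_mulVec, one_mulVec, dotProduct_sub]
  linarith

theorem posSemidef_one_add_sub_two_smul_diagonal (hsymm : W.IsSymm)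
    (hW : W ∈ doublyStochastic ℝ ι) : (1 + W - (2 : ℝ) • diagonal fun i => W i i).PosSemidef := by
  obtain ⟨hnonneg, -, -⟩ := mem_doublyStochastic_iff_sum.mp hW
  refine PosSemidef.of_dotProduct_mulVec_nonneg ((isHermitian_one.add
    (isHermitian_iff_isSymm.mpr hsymm)).sub ((isHermitian_diagonal _).smul (.all _))) fun v => ?_
  have hdiag : ∑ i, W i i * (v i + 1 * v i) ^ 2 ≤ ∑ i, ∑ j, W i j * (v i + 1 * v j) ^ 2 :=
    Finset.sum_le_sum fun i _ => Finset.single_le_sum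
      (f := fun j => W i j * (v i + 1 * v j) ^ 2)
      (fun j _ => mul_nonneg (hnonneg i j) (sq_nonneg _)) (Finset.mem_univ i)
  have hdiag_eq : ∑ i, W i i * (v i + 1 * v i) ^ 2 = 4 * ∑ i, v i * (W i i * v i) := by
    rw [Finset.mul_sum]; exact Finset.sum_congr rfl fun i _ => by ring
  rw [sum_sum_mul_add_mul_sq hW, hdiag_eq] at hdiag
  simp only [star_trivial, sub_mulVec, add_mulVec, one_mulVec, smul_mulVec,
    dotProduct_sub, dotProduct_add, dotProduct_smul, smul_eq_mul]
  simp only [dotProduct, mulVec_diagonal] at hdiag ⊢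
  linarith

end DoublyStochastic

section InvSqrtCongr

variable {m : Type*} [Fintype m] [DecidableEq m] {D M : Matrix m m ℝ}

theorem PosSemidef.sqrt_eq_cfcSqrt (hD : D.PosSemidef) : hD.sqrt = CFC.sqrt D := by
  rw [CFC.sqrt_eq_real_sqrt D hD.nonneg, cfcₙ_eq_cfc, hD.1.cfc_eq, IsHermitian.cfc,
    Unitary.conjStarAlgAut_apply]
  rfl

theorem isHermitian_inv_cfcSqrt (D : Matrix m m ℝ) : (CFC.sqrt D)⁻¹.IsHermitian :=
  (CFC.sqrt_nonneg D).posSemidef.isHermitian.inv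

theorem PosSemidef.inv_cfcSqrt_conj (hM : M.PosSemidef) (D : Matrix m m ℝ) :
    ((CFC.sqrt D)⁻¹ * M * (CFC.sqrt D)⁻¹).PosSemidef := by
  simpa only [(isHermitian_inv_cfcSqrt D).eq] using hM.mul_mul_conjTranspose_same (CFC.sqrt D)⁻¹

theorem PosDef.isUnit_cfcSqrt (hD : D.PosDef) : IsUnit (CFC.sqrt D) :=
  (CFC.isUnit_sqrt_iff D hD.posSemidef.nonneg).mpr hD.isUnit

theorem PosDef.inv_cfcSqrt_conj (hD : D.PosDef) (hM : M.PosDef) :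
    ((CFC.sqrt D)⁻¹ * M * (CFC.sqrt D)⁻¹).PosDef := by
  simpa only [star_eq_conjTranspose, (isHermitian_inv_cfcSqrt D).eq] using
    (IsUnit.posDef_star_right_conjugate_iff (isUnit_nonsing_inv_iff.mpr hD.isUnit_cfcSqrt)).mpr hM

theorem PosDef.inv_cfcSqrt_mul_self_mul_inv_cfcSqrt (hD : D.PosDef) :
    (CFC.sqrt D)⁻¹ * D * (CFC.sqrt D)⁻¹ = 1 := by
  have hdet := (isUnit_iff_isUnit_det _).mp hD.isUnit_cfcSqrt
  nth_rw 2 [← CFC.sqrt_mul_sqrt_self D hD.posSemidef.nonneg]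
  rw [← Matrix.mul_assoc, nonsing_inv_mul _ hdet, Matrix.one_mul, mul_nonsing_inv _ hdet]

theorem PosDef.smul_one_sub_inv_cfcSqrt_conj (hD : D.PosDef) (c : ℝ) (M : Matrix m m ℝ) :
    c • 1 - (CFC.sqrt D)⁻¹ * M * (CFC.sqrt D)⁻¹
      = (CFC.sqrt D)⁻¹ * (c • D - M) * (CFC.sqrt D)⁻¹ := by
  rw [Matrix.mul_sub, Matrix.sub_mul, Matrix.mul_smul, Matrix.smul_mul,
    hD.inv_cfcSqrt_mul_self_mul_inv_cfcSqrt]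

end InvSqrtCongr

end Matrix

section BlockDiag

variable {n d d' : ℕ}

theorem blockDiag_eq_sum_kronecker (A : Fin n → Matrix (Fin d) (Fin d') ℝ) :
    blockDiag A = ∑ i, diagonal (Pi.single i 1) ⊗ₖ A i := by
  ext ⟨i, a⟩ ⟨j, b⟩
  by_cases hij : i = j
  · subst hij
    simp [_root_.blockDiag, Matrix.sum_apply, Pi.single_apply]
  · simp [_root_.blockDiag, Matrix.sum_apply, hij]

theorem posSemidef_blockDiag {A : Fin n → Matrix (Fin d) (Fin d) ℝ}
    (hA : ∀ i, (A i).PosSemidef) : (blockDiag A).PosSemidef :=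
  blockDiag_eq_sum_kronecker A ▸ posSemidef_sum _ fun i _ =>
    (PosSemidef.diagonal (Pi.single_nonneg.mpr zero_le_one)).kronecker (hA i)

theorem blockDiag_sub_smul_one (A : Fin n → Matrix (Fin d) (Fin d) ℝ) (c : ℝ) :
    blockDiag (fun i => A i - c • 1) = blockDiag A - c • 1 := by
  ext ⟨i, a⟩ ⟨j, b⟩
  by_cases hij : i = j <;> simp [_root_.blockDiag, one_apply, hij]

end BlockDiag

theorem IsMixingMatrix.mem_doublyStochastic {n : ℕ} {W : Matrix (Fin n) (Fin n) ℝ} {θ Θ : ℝ}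
    (hW : IsMixingMatrix W θ Θ) : W ∈ doublyStochastic ℝ (Fin n) :=
  mem_doublyStochastic_iff_sum.mpr ⟨hW.nonneg, hW.row_sum, hW.col_sum⟩

theorem two_mul_one_sub_le_div_mul {θ Θ w κ : ℝ} (hθ : θ ≤ w) (hΘ : w ≤ Θ) (hΘ1 : Θ < 1)
    (hκ : 0 < κ) : 2 * (1 - w) ≤ 2 * (1 - θ) / (2 * (1 - Θ) + κ) * (κ + 2 * (1 - w)) := by
  rw [div_mul_eq_mul_div, le_div_iff₀ (by linarith)]
  nlinarith [mul_nonneg (sub_nonneg.mpr hθ) hκ.le,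
    mul_nonneg (sub_nonneg.mpr (hθ.trans hΘ)) (by linarith : (0 : ℝ) ≤ 1 - w)]

section Splitting

variable {n d1 d2 : ℕ} {W : Matrix (Fin n) (Fin n) ℝ} {β μ : ℝ}
  {g : Fin n → Vec d1 → Vec d2 → ℝ} {x : Fin n → Vec d1} {y : Fin n → Vec d2}

theorem posSemidef_bigHessYY'_sub_smul_one
    (hlow : ∀ i, (hessYY (g i) (x i) (y i) - μ • 1).PosSemidef) :
    (bigHessYY' g x y - μ • 1).PosSemidef := by
  rw [bigHessYY', ← blockDiag_sub_smul_one]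
  exact posSemidef_blockDiag hlow

theorem Dmat'_eq (μ : ℝ) :
    Dmat' W β g x y = β • (bigHessYY' g x y - μ • 1)
      + diagonal (fun i => β * μ + 2 * (1 - W i i)) ⊗ₖ 1 := by
  ext ⟨i, a⟩ ⟨j, b⟩
  simp [Dmat', kronDiag, diagonal_apply, one_apply]
  split_ifs <;> simp_all
  ring

theorem smul_Dmat'_sub_Bmat (c μ : ℝ) :
    c • Dmat' W β g x y - Bmat W d2 = (c * β) • (bigHessYY' g x y - μ • 1) + (1 - W) ⊗ₖ 1
      + diagonal (fun i => c * (β * μ + 2 * (1 - W i i)) - 2 * (1 - W i i)) ⊗ₖ 1 := by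
  ext ⟨i, a⟩ ⟨j, b⟩
  simp [Dmat', Bmat, kron1, kronDiag, diagonal_apply, one_apply]
  split_ifs <;> simp_all <;> ring

theorem Bmat_eq_kronecker (d : ℕ) :
    Bmat W d = (1 + W - (2 : ℝ) • diagonal fun i => W i i) ⊗ₖ 1 := by
  ext ⟨i, a⟩ ⟨j, b⟩
  simp [Bmat, kron1, kronDiag, diagonal_apply, one_apply]
  split_ifs <;> simp_all
  ring

theorem posSemidef_Bmat (hsymm : W.IsSymm) (hW : W ∈ doublyStochastic ℝ (Fin n)) (d : ℕ) :
    (Bmat W d).PosSemidef :=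
  Bmat_eq_kronecker d ▸ (posSemidef_one_add_sub_two_smul_diagonal hsymm hW).kronecker .one

theorem posDef_Dmat' (hβ : 0 ≤ β) (hP : (bigHessYY' g x y - μ • 1).PosSemidef)
    (hdiag : ∀ i, 0 < β * μ + 2 * (1 - W i i)) : (Dmat' W β g x y).PosDef :=
  Dmat'_eq μ ▸ PosDef.posSemidef_add (hP.smul hβ) ((PosDef.diagonal hdiag).kronecker .one)

theorem posSemidef_smul_Dmat'_sub_Bmat {c : ℝ} (hsymm : W.IsSymm)
    (hW : W ∈ doublyStochastic ℝ (Fin n)) (hP : (bigHessYY' g x y - μ • 1).PosSemidef)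
    (hcβ : 0 ≤ c * β) (hdiag : ∀ i, 2 * (1 - W i i) ≤ c * (β * μ + 2 * (1 - W i i))) :
    (c • Dmat' W β g x y - Bmat W d2).PosSemidef :=
  smul_Dmat'_sub_Bmat c μ ▸
    ((hP.smul hcβ).add ((posSemidef_one_sub_of_mem_doublyStochastic hsymm hW).kronecker .one)).add
      ((PosSemidef.diagonal fun i => sub_nonneg.mpr (hdiag i)).kronecker .one)

theorem posDef_Dmat'_sub_Bmat (hsymm : W.IsSymm) (hW : W ∈ doublyStochastic ℝ (Fin n))
    (hβ : 0 ≤ β) (hP : (bigHessYY' g x y - μ • 1).PosSemidef) (hβμ : 0 < β * μ) :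
    (Dmat' W β g x y - Bmat W d2).PosDef := by
  rw [← one_smul ℝ (Dmat' W β g x y), smul_Dmat'_sub_Bmat 1 μ, one_mul]
  exact PosDef.posSemidef_add
    ((hP.smul hβ).add ((posSemidef_one_sub_of_mem_doublyStochastic hsymm hW).kronecker .one))
    ((PosDef.diagonal fun i => by linarith).kronecker .one)

end Splitting

theorem hessian_splitting_spectral_bound_general {n d1 d2 : ℕ}
    (W : Matrix (Fin n) (Fin n) ℝ) (θ Θ : ℝ)
    (hW : IsMixingMatrix W θ Θ)
    (g : Fin n → Vec d1 → Vec d2 → ℝ)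
    (μg : ℝ) (hμg : 0 < μg)
    (hlow : ∀ i x y,
      (hessYY (g i) x y - μg • (1 : Matrix (Fin d2) (Fin d2) ℝ)).PosSemidef)
    (β : ℝ) (hβ : 0 < β)
    (ρ : ℝ) (hρ : ρ = 2 * (1 - θ) / (2 * (1 - Θ) + β * μg)) :
    ∀ (x : Fin n → Vec d1) (y : Fin n → Vec d2),
      (Dmat' W β g x y).PosDef ∧ (Bmat W d2).PosSemidef ∧
      ∀ hD : (Dmat' W β g x y).PosSemidef,
        ((hD.sqrt)⁻¹ * Bmat W d2 * (hD.sqrt)⁻¹).PosSemidef ∧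
        (ρ • (1 : Matrix (Fin n × Fin d2) (Fin n × Fin d2) ℝ) -
          (hD.sqrt)⁻¹ * Bmat W d2 * (hD.sqrt)⁻¹).PosSemidef ∧
        ((1 : Matrix (Fin n × Fin d2) (Fin n × Fin d2) ℝ) -
          (hD.sqrt)⁻¹ * Bmat W d2 * (hD.sqrt)⁻¹).PosDef := by
  intro x y
  have hβμ : 0 < β * μg := mul_pos hβ hμg
  have hDS := hW.mem_doublyStochastic
  have hP := posSemidef_bigHessYY'_sub_smul_one (x := x) (y := y) fun i => hlow i (x i) (y i)
  have hB := posSemidef_Bmat hW.symm hDS d2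
  have hD : (Dmat' W β g x y).PosDef :=
    posDef_Dmat' hβ.le hP fun i => by linarith [hW.diag_le_Theta i, hW.Theta_lt_one]
  have hρDB : (ρ • Dmat' W β g x y - Bmat W d2).PosSemidef := by
    -- `0 ≤ ρ` needs some `θ ≤ wᵢᵢ ≤ Θ < 1`; without agents every matrix here is zero.
    obtain hn | ⟨⟨i₀⟩⟩ := isEmpty_or_nonempty (Fin n)
    · exact Subsingleton.elim 0 (ρ • Dmat' W β g x y - Bmat W d2) ▸ .zero
    have hρ0 : 0 ≤ ρ := hρ ▸ div_nonneg
      (by linarith [hW.theta_le_diag i₀, hW.diag_le_Theta i₀, hW.Theta_lt_one])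
      (by linarith [hW.Theta_lt_one])
    exact posSemidef_smul_Dmat'_sub_Bmat hW.symm hDS hP (mul_nonneg hρ0 hβ.le) fun i =>
      hρ ▸ two_mul_one_sub_le_div_mul (hW.theta_le_diag i) (hW.diag_le_Theta i)
        hW.Theta_lt_one hβμ
  refine ⟨hD, hB, fun hD' => ?_⟩
  have hHconj := hD.smul_one_sub_inv_cfcSqrt_conj 1 (Bmat W d2)
  rw [one_smul, one_smul] at hHconj
  rw [hD'.sqrt_eq_cfcSqrt, hD.smul_one_sub_inv_cfcSqrt_conj, hHconj]
  exact ⟨hB.inv_cfcSqrt_conj _, hρDB.inv_cfcSqrt_conj _,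
    hD.inv_cfcSqrt_conj (posDef_Dmat'_sub_Bmat hW.symm hDS hβ.le hP hβμ)⟩

theorem hessian_splitting_spectral_bound {n d1 d2 : ℕ}
    (W : Matrix (Fin n) (Fin n) ℝ) (θ Θ : ℝ)
    (hW : IsMixingMatrix W θ Θ)
    (g : Fin n → Vec d1 → Vec d2 → ℝ)
    (hg : ∀ i, ContDiff ℝ 2 (Function.uncurry (g i)))
    (μg : ℝ) (hμg : 0 < μg)
    (hlow : ∀ i x y,
      (hessYY (g i) x y - μg • (1 : Matrix (Fin d2) (Fin d2) ℝ)).PosSemidef)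
    (β : ℝ) (hβ : 0 < β)
    (ρ : ℝ) (hρ : ρ = 2 * (1 - θ) / (2 * (1 - Θ) + β * μg)) :
    ∀ (x : Fin n → Vec d1) (y : Fin n → Vec d2),
      (Dmat' W β g x y).PosDef ∧ (Bmat W d2).PosSemidef ∧
      ∀ hD : (Dmat' W β g x y).PosSemidef,
        ((hD.sqrt)⁻¹ * Bmat W d2 * (hD.sqrt)⁻¹).PosSemidef ∧
        (ρ • (1 : Matrix (Fin n × Fin d2) (Fin n × Fin d2) ℝ) -
          (hD.sqrt)⁻¹ * Bmat W d2 * (hD.sqrt)⁻¹).PosSemidef ∧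
        ((1 : Matrix (Fin n × Fin d2) (Fin n × Fin d2) ℝ) -
          (hD.sqrt)⁻¹ * Bmat W d2 * (hD.sqrt)⁻¹).PosDef :=
  hessian_splitting_spectral_bound_general W θ Θ hW g μg hμg hlow β hβ ρ hρ
end

section
/- Inexact-gradient descent bound (appendix Lemma). Let Φ : ℝ^N → ℝ be differentiable with L-Lipschitz gradient (L > 0), and suppose Φ(x) ≥ Φ* for all x ∈ ℝ^N. Let 0 < α ≤ 1/L, let g_0, g_1, … ∈ ℝ^N be arbitrary, and define x_{r+1} := x_r − α g_r and Δ_r := g_r − ∇Φ(x_r). Then for every k ≥ 0: √(Φ(x_{k+1}) − Φ*) ≤ √(Φ(x_0) − Φ*) + (1/√(2L)) Σ_{r=0}^{k} ‖Δ_r‖. (In the paper Φ = F(·, y̌*(·)) with L = L_F, g_r = ∇̂F(x_r, y_r^M), Φ* = F(x̌*, y̌*(x̌*)).) -/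
/-!
By the descent lemma, a step `x ↦ x - α g` with `α ≤ 1/L` decreases `Φ` up to the error
`α/2 (‖g - ∇Φ x‖² - ‖∇Φ x‖²) ≤ ‖g - ∇Φ x‖² / (2L)`. Hence `Φ(x_{r+1}) - Φ* ≤ (Φ(x_r) - Φ*) + c_r²`
with `c_r = ‖Δ_r‖ / √(2L)`, so `√(Φ(x_{r+1}) - Φ*) ≤ √(Φ(x_r) - Φ*) + c_r`, and these per-step
bounds telescope.
-/

open Finset InnerProductSpace

section Descent

variable {E : Type*} [NormedAddCommGroup E] [InnerProductSpace ℝ E] [CompleteSpace E]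

theorem HasGradientAt.hasDerivAt_add_smul {f : E → ℝ} {f' x v : E} {t : ℝ}
    (h : HasGradientAt f f' (x + t • v)) :
    HasDerivAt (fun s : ℝ => f (x + s • v)) ⟪f', v⟫_ℝ t := by
  have hline : HasDerivAt (fun s : ℝ => x + s • v) v t := by
    simpa using ((hasDerivAt_id t).smul_const v).const_add x
  exact (h.hasFDerivAt.comp_hasDerivAt t hline).congr_deriv (by simp [toDual_apply_apply])

variable {Φ : E → ℝ} {L : ℝ}

/-- The descent lemma. -/
theorem le_add_inner_gradient_add_sq_norm (hdiff : Differentiable ℝ Φ)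
    (hlip : ∀ u v, ‖gradient Φ u - gradient Φ v‖ ≤ L * ‖u - v‖) (x v : E) :
    Φ (x + v) ≤ Φ x + ⟪gradient Φ x, v⟫_ℝ + L / 2 * ‖v‖ ^ 2 := by
  set f : ℝ → ℝ := fun t => Φ (x + t • v) - t * ⟪gradient Φ x, v⟫_ℝ - L / 2 * t ^ 2 * ‖v‖ ^ 2
  have hf : ∀ t, HasDerivAt f
      (⟪gradient Φ (x + t • v) - gradient Φ x, v⟫_ℝ - L * t * ‖v‖ ^ 2) t := fun t => by
    have := (((hdiff (x + t • v)).hasGradientAt.hasDerivAt_add_smul).sub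
      ((hasDerivAt_id t).mul_const ⟪gradient Φ x, v⟫_ℝ)).sub
      (((hasDerivAt_pow 2 t).const_mul (L / 2)).mul_const (‖v‖ ^ 2))
    exact this.congr_deriv (by rw [inner_sub_left]; ring)
  have hf_nonpos : ∀ t ∈ interior (Set.Icc (0 : ℝ) 1),
      ⟪gradient Φ (x + t • v) - gradient Φ x, v⟫_ℝ - L * t * ‖v‖ ^ 2 ≤ 0 := by
    intro t ht
    rw [interior_Icc] at ht
    have := calc ⟪gradient Φ (x + t • v) - gradient Φ x, v⟫_ℝ
        ≤ ‖gradient Φ (x + t • v) - gradient Φ x‖ * ‖v‖ := real_inner_le_norm _ _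
      _ ≤ L * ‖x + t • v - x‖ * ‖v‖ := by gcongr; exact hlip _ _
      _ = L * t * ‖v‖ ^ 2 := by
        rw [add_sub_cancel_left, norm_smul, Real.norm_of_nonneg ht.1.le]; ring
    linarith
  have hanti : AntitoneOn f (Set.Icc 0 1) :=
    antitoneOn_of_hasDerivWithinAt_nonpos (convex_Icc 0 1)
      (fun t _ => (hf t).continuousAt.continuousWithinAt)
      (fun t _ => (hf t).hasDerivWithinAt) hf_nonpos
  have h10 : f 1 ≤ f 0 := hanti (by simp) (by simp) zero_le_one
  simp only [f, one_smul, zero_smul, add_zero, one_mul, zero_mul, one_pow, mul_one,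
    sub_zero, ne_eq, OfNat.ofNat_ne_zero, not_false_eq_true, zero_pow, mul_zero] at h10
  linarith

theorem le_add_sq_norm_sub_gradient_of_step_le (hdiff : Differentiable ℝ Φ)
    (hlip : ∀ u v, ‖gradient Φ u - gradient Φ v‖ ≤ L * ‖u - v‖) (hL : 0 < L) {α : ℝ} (hα0 : 0 ≤ α)
    (hα : α ≤ 1 / L) (x g : E) :
    Φ (x - α • g) ≤ Φ x + ‖g - gradient Φ x‖ ^ 2 / (2 * L) := by
  have hdescent := le_add_inner_gradient_add_sq_norm hdiff hlip x (-(α • g))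
  rw [← sub_eq_add_neg, inner_neg_right, inner_smul_right, norm_neg, norm_smul,
    Real.norm_of_nonneg hα0] at hdescent
  have hαL : α * L ≤ 1 := (le_div_iff₀ hL).1 hα
  have hpolar := norm_sub_sq_real g (gradient Φ x)
  rw [real_inner_comm] at hpolar
  calc Φ (x - α • g)
      ≤ Φ x - α * ⟪gradient Φ x, g⟫_ℝ + α / 2 * ‖g‖ ^ 2 := by
        nlinarith [mul_nonneg hα0 (sq_nonneg ‖g‖)]
    _ = Φ x + α / 2 * (‖g - gradient Φ x‖ ^ 2 - ‖gradient Φ x‖ ^ 2) := by rw [hpolar]; ring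
    _ ≤ Φ x + α / 2 * ‖g - gradient Φ x‖ ^ 2 := by gcongr; linarith [sq_nonneg ‖gradient Φ x‖]
    _ ≤ Φ x + ‖g - gradient Φ x‖ ^ 2 / (2 * L) := by
        have hα2 : α / 2 ≤ 1 / (2 * L) := by
          calc α / 2 ≤ 1 / L / 2 := by gcongr
            _ = 1 / (2 * L) := by ring
        rw [div_eq_mul_one_div (‖g - gradient Φ x‖ ^ 2), mul_comm (‖g - gradient Φ x‖ ^ 2)]
        gcongr

end Descent

theorem Real.sqrt_le_sqrt_add_of_le_add_sq {a b c : ℝ} (ha : 0 ≤ a) (hc : 0 ≤ c)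
    (h : b ≤ a + c ^ 2) : √b ≤ √a + c := by
  rw [Real.sqrt_le_left (by positivity)]
  nlinarith [Real.sq_sqrt ha, Real.sqrt_nonneg a]

theorem le_add_sum_range_of_succ_le_add {M : Type*} [AddCommMonoid M] [PartialOrder M]
    [IsOrderedAddMonoid M] {u d : ℕ → M} (h : ∀ r, u (r + 1) ≤ u r + d r) :
    ∀ n, u n ≤ u 0 + ∑ r ∈ range n, d r
  | 0 => by simp
  | n + 1 => by
    rw [sum_range_succ, ← add_assoc]
    exact (h n).trans (add_le_add_left (le_add_sum_range_of_succ_le_add h n) _)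

theorem inexact_gradient_descent_sqrt_bound {N : ℕ}
    (Φ : EuclideanSpace ℝ (Fin N) → ℝ) (L : ℝ) (hL : 0 < L)
    (hdiff : Differentiable ℝ Φ)
    (hlip : ∀ u v, ‖gradient Φ u - gradient Φ v‖ ≤ L * ‖u - v‖)
    (Φstar : ℝ) (hlb : ∀ x, Φstar ≤ Φ x)
    (α : ℝ) (hα0 : 0 < α) (hα : α ≤ 1 / L)
    (g x : ℕ → EuclideanSpace ℝ (Fin N))
    (hx : ∀ r, x (r + 1) = x r - α • g r) :
    ∀ k : ℕ,
      Real.sqrt (Φ (x (k + 1)) - Φstar) ≤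
        Real.sqrt (Φ (x 0) - Φstar) +
          (1 / Real.sqrt (2 * L)) *
            ∑ r ∈ Finset.range (k + 1), ‖g r - gradient Φ (x r)‖ := by
  have hstep (r : ℕ) : √(Φ (x (r + 1)) - Φstar) ≤
      √(Φ (x r) - Φstar) + ‖g r - gradient Φ (x r)‖ / √(2 * L) := by
    refine Real.sqrt_le_sqrt_add_of_le_add_sq (sub_nonneg.2 (hlb _)) (by positivity) ?_
    rw [div_pow, Real.sq_sqrt (by positivity), hx r]
    linarith [le_add_sq_norm_sub_gradient_of_step_le hdiff hlip hL hα0.le hα (x r) (g r)]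
  intro k
  simpa [mul_sum, div_eq_inv_mul] using
    le_add_sum_range_of_succ_le_add (u := fun r => √(Φ (x r) - Φstar)) hstep (k + 1)
end
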